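/- arXiv:2111.07458 — 4 statements merged into one kernel-verified Lean document; each statement's English description precedes it below -/
import Mathlib

section
/- Let K ≥ 2, σ > 0, and let λ : {1,…,K} → ℝ have a unique maximizer a⋆. For a ≠ a⋆ set Δ_a = λ_{a⋆} − λ_a, set Δ_{a⋆} = 0, and let Δ_{b⋆} = min_{a ≠ a⋆} Δ_a. Define H = Σ_{a=1}^K 2σ² / (max{Δ_a, Δ_{b⋆}})². Then for every probability vector w = (w_1,…,w_K) (w_a ≥ 0, Σ_a w_a = 1), the infimum over all ζ : {1,…,K} → ℝ such that a⋆ is not a maximizer of ζ (i.e., there exists b ≠ a⋆ with ζ_b > ζ_{a⋆}) of Σ_{a=1}^K w_a (λ_a − ζ_a)² / (2σ²) is at most H^{-1}. Equivalently, the Gaussian characteristic time T⋆(λ) = [sup_w inf_ζ Σ_a w_a (λ_a − ζ_a)²/(2σ²)]^{-1} satisfies T⋆(λ) ≥ H. -/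
open Finset Filter Topology

/-! Lowering `ζ_{a⋆}` to just below `λ_b`, or raising `ζ_b` to just above `λ_{a⋆}`, puts `ζ` in the
alternative at a cost arbitrarily close to `w_{a⋆} Δ_b² / 2σ²`, resp. `w_b Δ_b² / 2σ²`. Writing
`M_a = max {Δ_a, Δ_{b⋆}}`, so that `H = 2σ² ∑_a M_a⁻²`, some arm `a` has `w_a ≤ M_a⁻² / ∑_{a'} M_{a'}⁻²`
since the weights sum to one; for `a = a⋆` take `b = b⋆` in the first move, otherwise `b = a` in
the second. -/

variable {ι : Type*} [Fintype ι]

theorem exists_mul_le_inv_sum_inv [Nonempty ι] (w m : ι → ℝ) (hm : ∀ a, 0 < m a)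
    (hw : ∑ a, w a = 1) : ∃ a, w a * m a ≤ (∑ a, (m a)⁻¹)⁻¹ := by
  have hS : 0 < ∑ a, (m a)⁻¹ := sum_pos (fun a _ => inv_pos.mpr (hm a)) univ_nonempty
  obtain ⟨a, -, ha⟩ := exists_le_of_sum_le (f := fun a => w a * ∑ c, (m c)⁻¹)
    (g := fun a => (m a)⁻¹) univ_nonempty (by rw [← sum_mul, hw, one_mul])
  refine ⟨a, ?_⟩
  calc w a * m a = w a * (∑ c, (m c)⁻¹) * m a * (∑ c, (m c)⁻¹)⁻¹ := by
        rw [mul_right_comm (w a), mul_inv_cancel_right₀ hS.ne']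
    _ ≤ (m a)⁻¹ * m a * (∑ c, (m c)⁻¹)⁻¹ := by gcongr; exact (hm a).le
    _ = (∑ c, (m c)⁻¹)⁻¹ := by rw [inv_mul_cancel₀ (hm a).ne', one_mul]

theorem csInf_le_of_tendsto_nhdsGT {S : Set ℝ} (hS : BddBelow S) {f : ℝ → ℝ} {x : ℝ}
    (hf : Tendsto f (𝓝[>] 0) (𝓝 x)) (hmem : ∀ δ > 0, f δ ∈ S) : sInf S ≤ x :=
  ge_of_tendsto hf (eventually_nhdsWithin_of_forall fun δ hδ => csInf_le hS (hmem δ hδ))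

def altCosts (w lam : ι → ℝ) (astar : ι) (c : ℝ) : Set ℝ :=
  {v | ∃ ζ : ι → ℝ, (∃ b, b ≠ astar ∧ ζ astar < ζ b) ∧ v = ∑ a, w a * (lam a - ζ a) ^ 2 / c}

theorem bddBelow_altCosts {w : ι → ℝ} (hw : ∀ a, 0 ≤ w a) (lam : ι → ℝ) (astar : ι) {c : ℝ}
    (hc : 0 ≤ c) : BddBelow (altCosts w lam astar c) := by
  refine ⟨0, ?_⟩
  rintro _ ⟨ζ, -, rfl⟩
  exact sum_nonneg fun a _ => div_nonneg (mul_nonneg (hw a) (sq_nonneg _)) hc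

variable [DecidableEq ι]

theorem sum_mul_sub_update_sq_div (w lam : ι → ℝ) (a₀ : ι) (z c : ℝ) :
    ∑ a, w a * (lam a - Function.update lam a₀ z a) ^ 2 / c = w a₀ * (lam a₀ - z) ^ 2 / c := by
  rw [sum_eq_single a₀ (fun a _ ha => by simp [Function.update_of_ne ha]) (by simp)]
  simp

theorem sInf_altCosts_le_of_update {w : ι → ℝ} (hw : ∀ a, 0 ≤ w a) (lam : ι → ℝ) (astar a₀ : ι)
    {c : ℝ} (hc : 0 ≤ c) {z : ℝ → ℝ} {z₀ : ℝ} (hz : Tendsto z (𝓝[>] 0) (𝓝 z₀))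
    (halt : ∀ δ > 0, ∃ b, b ≠ astar ∧
      Function.update lam a₀ (z δ) astar < Function.update lam a₀ (z δ) b) :
    sInf (altCosts w lam astar c) ≤ w a₀ * (lam a₀ - z₀) ^ 2 / c :=
  csInf_le_of_tendsto_nhdsGT (bddBelow_altCosts hw lam astar hc)
    (((hz.const_sub _).pow 2).const_mul _ |>.div_const _)
    fun δ hδ => ⟨_, halt δ hδ, (sum_mul_sub_update_sq_div w lam a₀ (z δ) c).symm⟩

theorem sInf_altCosts_le_of_lower {w : ι → ℝ} (hw : ∀ a, 0 ≤ w a) (lam : ι → ℝ) {astar b : ι}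
    (hb : b ≠ astar) {c : ℝ} (hc : 0 ≤ c) :
    sInf (altCosts w lam astar c) ≤ w astar * (lam astar - lam b) ^ 2 / c := by
  refine sInf_altCosts_le_of_update hw lam astar astar hc (z := fun δ => lam b - δ) ?_
    fun δ hδ => ⟨b, hb, by simp [Function.update_of_ne hb, hδ]⟩
  exact ((continuous_const.sub continuous_id).tendsto' 0 _ (sub_zero _)).mono_left
    nhdsWithin_le_nhds

theorem sInf_altCosts_le_of_raise {w : ι → ℝ} (hw : ∀ a, 0 ≤ w a) (lam : ι → ℝ) {astar b : ι}
    (hb : b ≠ astar) {c : ℝ} (hc : 0 ≤ c) :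
    sInf (altCosts w lam astar c) ≤ w b * (lam astar - lam b) ^ 2 / c := by
  rw [sub_sq_comm]
  refine sInf_altCosts_le_of_update hw lam astar b hc (z := fun δ => lam astar + δ) ?_
    fun δ hδ => ⟨b, hb, by simp [Function.update_of_ne hb.symm, hδ]⟩
  exact ((continuous_const.add continuous_id).tendsto' 0 _ (add_zero _)).mono_left
    nhdsWithin_le_nhds

theorem characteristic_time_lower_bound_general
    (K : ℕ) (σ : ℝ)
    (lam : Fin K → ℝ) (astar : Fin K)
    (hbest : ∀ a : Fin K, a ≠ astar → lam a < lam astar)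
    (Δ : Fin K → ℝ)
    (hΔ : ∀ a : Fin K, Δ a = if a = astar then 0 else lam astar - lam a)
    (Δb : ℝ)
    (hΔb_le : ∀ a : Fin K, a ≠ astar → Δb ≤ Δ a)
    (hΔb_mem : ∃ a : Fin K, a ≠ astar ∧ Δb = Δ a)
    (H : ℝ) (hH : H = ∑ a : Fin K, 2 * σ ^ 2 / (max (Δ a) Δb) ^ 2)
    (w : Fin K → ℝ) (hw0 : ∀ a : Fin K, 0 ≤ w a) (hw1 : ∑ a : Fin K, w a = 1) :
    sInf {v : ℝ | ∃ ζ : Fin K → ℝ, (∃ b : Fin K, b ≠ astar ∧ ζ astar < ζ b) ∧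
        v = ∑ a : Fin K, w a * (lam a - ζ a) ^ 2 / (2 * σ ^ 2)} ≤ H⁻¹ := by
  obtain ⟨b₀, hb₀, rfl⟩ := hΔb_mem
  have hgap (a : Fin K) (ha : a ≠ astar) : Δ a = lam astar - lam a := by rw [hΔ a, if_neg ha]
  have hgap_pos : 0 < Δ b₀ := by rw [hgap b₀ hb₀]; linarith [hbest b₀ hb₀]
  have : Nonempty (Fin K) := ⟨astar⟩
  obtain ⟨a, ha⟩ := exists_mul_le_inv_sum_inv w (fun a => max (Δ a) (Δ b₀) ^ 2)
    (fun a => pow_pos (lt_max_of_lt_right hgap_pos) 2) hw1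
  have hcost : w a * max (Δ a) (Δ b₀) ^ 2 / (2 * σ ^ 2) ≤ H⁻¹ := by
    have hH_factor : H = 2 * σ ^ 2 * ∑ a, (max (Δ a) (Δ b₀) ^ 2)⁻¹ := by
      simp only [hH, div_eq_mul_inv, mul_sum]
    rw [hH_factor, mul_inv, div_eq_mul_inv, mul_comm (2 * σ ^ 2)⁻¹]
    exact mul_le_mul_of_nonneg_right ha (by positivity)
  have hc : 0 ≤ 2 * σ ^ 2 := by positivity
  refine le_trans ?_ hcost
  by_cases ha_best : a = astar
  · subst ha_best
    rw [hΔ a, if_pos rfl, max_eq_right hgap_pos.le, hgap b₀ hb₀]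
    exact sInf_altCosts_le_of_lower hw0 lam hb₀ hc
  · rw [max_eq_left (hΔb_le a ha_best), hgap a ha_best]
    exact sInf_altCosts_le_of_raise hw0 lam ha_best hc

/-- Core step of the sample-complexity lower bound (Theorem 1): for a Gaussian bandit
instance `lam` with unique best arm `astar`, gaps `Δ` and second-best gap `Δb`, and
complexity `H = ∑_a 2σ² / max{Δ_a, Δ_{b⋆}}²`, every probability vector `w` satisfies
`inf_{ζ ∈ Alt(lam)} ∑_a w_a (lam_a - ζ_a)² / (2σ²) ≤ H⁻¹`; equivalently the Gaussian
characteristic time satisfies `T⋆(lam) ≥ H`. -/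
theorem characteristic_time_lower_bound
    (K : ℕ) (hK : 2 ≤ K) (σ : ℝ) (hσ : 0 < σ)
    (lam : Fin K → ℝ) (astar : Fin K)
    (hbest : ∀ a : Fin K, a ≠ astar → lam a < lam astar)
    (Δ : Fin K → ℝ)
    (hΔ : ∀ a : Fin K, Δ a = if a = astar then 0 else lam astar - lam a)
    (Δb : ℝ)
    (hΔb_le : ∀ a : Fin K, a ≠ astar → Δb ≤ Δ a)
    (hΔb_mem : ∃ a : Fin K, a ≠ astar ∧ Δb = Δ a)
    (H : ℝ) (hH : H = ∑ a : Fin K, 2 * σ ^ 2 / (max (Δ a) Δb) ^ 2)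
    (w : Fin K → ℝ) (hw0 : ∀ a : Fin K, 0 ≤ w a) (hw1 : ∑ a : Fin K, w a = 1) :
    sInf {v : ℝ | ∃ ζ : Fin K → ℝ, (∃ b : Fin K, b ≠ astar ∧ ζ astar < ζ b) ∧
        v = ∑ a : Fin K, w a * (lam a - ζ a) ^ 2 / (2 * σ ^ 2)} ≤ H⁻¹ :=
  characteristic_time_lower_bound_general K σ lam astar hbest Δ hΔ Δb hΔb_le hΔb_mem H hH w hw0 hw1
end

section
/- There exists a universal constant C > 0 such that: for every σ > 0, every α ∈ (0, 1/2], every real random variable X with mean μ that is σ-sub-Gaussian, and every event A with P(A) ≥ 1 − α (in particular P(A) > 0), one has | E[X · 1_A] / P(A) − μ | ≤ C σ α √(log(1/α)). -/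
open MeasureTheory ProbabilityTheory

/-- A real random variable `X` is `σ`-sub-Gaussian with mean `μ` under `P`:
it is measurable, integrable with mean `μ`, and its centered moment generating
function satisfies `E[exp (l (X - μ))] ≤ exp (l² σ² / 2)` for all `l ∈ ℝ`. -/
def IsSubGaussianRV {Ω : Type*} [MeasurableSpace Ω] (P : Measure Ω)
    (X : Ω → ℝ) (μ σ : ℝ) : Prop :=
  Measurable X ∧ Integrable X P ∧ (∫ ω, X ω ∂P) = μ ∧
    ∀ l : ℝ, Integrable (fun ω => Real.exp (l * (X ω - μ))) P ∧
      (∫ ω, Real.exp (l * (X ω - μ)) ∂P) ≤ Real.exp (l ^ 2 * σ ^ 2 / 2)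

/-! Write `Y = X - μ`. As `Y` has mean zero, `|∫_A Y| = |∫_{Aᶜ} Y| ≤ ∫_{Aᶜ} |Y|`. Integrating the
pointwise bound `|y| ≤ t + e^{-lt} (e^{ly} + e^{-ly}) / l` over `Aᶜ` and using the MGF bound with
`l = s / σ`, `t = σ s` gives `∫_{Aᶜ} |Y| ≤ σ (s P(Aᶜ) + 2 e^{-s²/2} / s)`. For
`s = √(2 log (1/α))` both terms are `O(σ α √(log (1/α)))`, and dividing by `P(A) ≥ 1/2` costs a
factor `2`. -/

open Real

lemma abs_le_add_exp_mul_add_exp_neg_mul {l : ℝ} (hl : 0 < l) (t y : ℝ) :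
    |y| ≤ t + exp (-(l * t)) * (exp (l * y) + exp (-l * y)) / l := by
  have hlin : l * (|y| - t) ≤ exp (l * (|y| - t)) := by
    linarith [add_one_le_exp (l * (|y| - t))]
  have hsplit : exp (l * (|y| - t)) = exp (-(l * t)) * exp |l * y| := by
    rw [abs_mul, abs_of_pos hl, ← exp_add]
    ring_nf
  rw [← sub_le_iff_le_add', le_div_iff₀ hl, mul_comm, neg_mul]
  calc l * (|y| - t) ≤ exp (l * (|y| - t)) := hlin
    _ = exp (-(l * t)) * exp |l * y| := hsplit
    _ ≤ exp (-(l * t)) * (exp (l * y) + exp (-(l * y))) := by gcongr; exact exp_abs_le _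

section SetIntegral

variable {Ω : Type*} [MeasurableSpace Ω] {P : Measure Ω}

lemma abs_setIntegral_le_setIntegral_compl_abs {Y : Ω → ℝ} (hY : Integrable Y P)
    (hY₀ : ∫ ω, Y ω ∂P = 0) {A : Set Ω} (hA : MeasurableSet A) :
    |∫ ω in A, Y ω ∂P| ≤ ∫ ω in Aᶜ, |Y ω| ∂P := by
  have hcompl : ∫ ω in A, Y ω ∂P = -∫ ω in Aᶜ, Y ω ∂P := by
    linarith [integral_add_compl hA hY]
  rw [hcompl, abs_neg]
  exact abs_integral_le_integral_abs

lemma ProbabilityTheory.HasSubgaussianMGF.setIntegral_abs_le {Y : Ω → ℝ} {c : NNReal}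
    (h : HasSubgaussianMGF Y c P) (B : Set Ω) {l : ℝ} (hl : 0 < l) (t : ℝ) :
    ∫ ω in B, |Y ω| ∂P ≤ t * P.real B + 2 * exp (c * l ^ 2 / 2 - l * t) / l := by
  have : IsFiniteMeasure P := by
    simpa [integrable_const_iff] using h.integrable_exp_mul 0
  set g : Ω → ℝ := fun ω => exp (l * Y ω) + exp (-l * Y ω)
  have hg : Integrable g P := (h.integrable_exp_mul l).add (h.integrable_exp_mul (-l))
  have hgB : ∫ ω in B, g ω ∂P ≤ 2 * exp (c * l ^ 2 / 2) := calc
    ∫ ω in B, g ω ∂P ≤ ∫ ω, g ω ∂P :=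
      setIntegral_le_integral hg (ae_of_all _ fun _ => by positivity)
    _ = mgf Y P l + mgf Y P (-l) :=
      integral_add (h.integrable_exp_mul l) (h.integrable_exp_mul (-l))
    _ ≤ 2 * exp (c * l ^ 2 / 2) := by
      linarith [h.mgf_le l, neg_sq l ▸ h.mgf_le (-l)]
  have hdom : Integrable (fun ω => t + exp (-(l * t)) * g ω / l) P :=
    (integrable_const t).add ((hg.const_mul _).div_const _)
  calc ∫ ω in B, |Y ω| ∂P ≤ ∫ ω in B, (t + exp (-(l * t)) * g ω / l) ∂P :=
        setIntegral_mono h.integrable.abs.integrableOn hdom.integrableOn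
          fun ω => abs_le_add_exp_mul_add_exp_neg_mul hl t (Y ω)
    _ = t * P.real B + exp (-(l * t)) * (∫ ω in B, g ω ∂P) / l := by
        rw [integral_add (integrable_const t).integrableOn
          ((hg.const_mul _).div_const _).integrableOn, setIntegral_const, integral_div,
          integral_const_mul, smul_eq_mul, mul_comm]
    _ ≤ t * P.real B + exp (-(l * t)) * (2 * exp (c * l ^ 2 / 2)) / l := by gcongr
    _ = t * P.real B + 2 * exp (c * l ^ 2 / 2 - l * t) / l := by
        rw [sub_eq_add_neg, exp_add]
        ring

end SetIntegral

lemma sqrt_two_mul_add_two_div_sqrt_two_mul_le {L : ℝ} (hL : log 2 ≤ L) :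
    √(2 * L) + 2 / √(2 * L) ≤ 4 * √L := by
  have hL₀ : 0 < L := (log_pos one_lt_two).trans_le hL
  have hsqrt2 : 1.4 < √2 ∧ √2 < 2 := by
    rw [lt_sqrt (by norm_num), sqrt_lt' two_pos]
    norm_num
  have hsq : √2 ^ 2 = 2 ∧ √L ^ 2 = L := ⟨sq_sqrt zero_le_two, sq_sqrt hL₀.le⟩
  have hr : 0 < √L := sqrt_pos.mpr hL₀
  have hlog2 : (0.69 : ℝ) < log 2 := by linarith [log_two_gt_d9]
  have hdiv : 2 / (√2 * √L) ≤ (4 - √2) * √L := by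
    rw [div_le_iff₀ (by positivity)]
    nlinarith
  rw [sqrt_mul zero_le_two]
  linarith

namespace IsSubGaussianRV

variable {Ω : Type*} [MeasurableSpace Ω] {P : Measure Ω} {X : Ω → ℝ} {μ σ : ℝ}

lemma hasSubgaussianMGF (h : IsSubGaussianRV P X μ σ) :
    HasSubgaussianMGF (fun ω => X ω - μ) (σ ^ 2).toNNReal P where
  integrable_exp_mul l := (h.2.2.2 l).1
  mgf_le l := by
    rw [mgf, Real.coe_toNNReal _ (sq_nonneg σ), mul_comm (σ ^ 2)]
    exact (h.2.2.2 l).2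

lemma setIntegral_abs_sub_le (h : IsSubGaussianRV P X μ σ) (hσ : 0 < σ) (B : Set Ω)
    {s : ℝ} (hs : 0 < s) :
    ∫ ω in B, |X ω - μ| ∂P ≤ σ * (s * P.real B + 2 * exp (-(s ^ 2 / 2)) / s) := by
  have hbound := h.hasSubgaussianMGF.setIntegral_abs_le B (div_pos hs hσ) (σ * s)
  have hexponent : σ ^ 2 * (s / σ) ^ 2 / 2 - s / σ * (σ * s) = -(s ^ 2 / 2) := by
    field_simp
    ring
  rw [Real.coe_toNNReal _ (sq_nonneg σ), hexponent] at hbound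
  exact hbound.trans_eq (by field_simp)

lemma integral_sub_eq_zero [IsProbabilityMeasure P] (h : IsSubGaussianRV P X μ σ) :
    ∫ ω, (X ω - μ) ∂P = 0 := by
  rw [integral_sub h.2.1 (integrable_const μ), h.2.2.1, integral_const, probReal_univ,
    one_smul, sub_self]

lemma abs_setIntegral_sub_le [IsProbabilityMeasure P] (h : IsSubGaussianRV P X μ σ)
    (hσ : 0 < σ) {α : ℝ} (hα : 0 < α) (hα₂ : α ≤ 1 / 2) {A : Set Ω} (hA : MeasurableSet A)
    (hAc : P.real Aᶜ ≤ α) :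
    |∫ ω in A, (X ω - μ) ∂P| ≤ 4 * σ * α * √(log (1 / α)) := by
  set L := log (1 / α)
  have hL : log 2 ≤ L := log_le_log two_pos (by rw [le_div_iff₀ hα]; linarith)
  have hL₀ : 0 < L := (log_pos one_lt_two).trans_le hL
  set s := √(2 * L)
  have hs : 0 < s := sqrt_pos.mpr (by positivity)
  -- `s` is chosen so that the Gaussian tail `exp (-s² / 2)` is exactly `α`.
  have htail : exp (-(s ^ 2 / 2)) = α := by
    rw [sq_sqrt (by positivity), mul_div_cancel_left₀ _ two_ne_zero, exp_neg,
      exp_log (by positivity), one_div, inv_inv]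
  calc |∫ ω in A, (X ω - μ) ∂P|
      ≤ ∫ ω in Aᶜ, |X ω - μ| ∂P :=
        abs_setIntegral_le_setIntegral_compl_abs h.hasSubgaussianMGF.integrable
          h.integral_sub_eq_zero hA
    _ ≤ σ * (s * P.real Aᶜ + 2 * exp (-(s ^ 2 / 2)) / s) := h.setIntegral_abs_sub_le hσ Aᶜ hs
    _ ≤ σ * (s * α + 2 * α / s) := by rw [htail]; gcongr
    _ = σ * α * (s + 2 / s) := by ring
    _ ≤ σ * α * (4 * √L) := by gcongr; exact sqrt_two_mul_add_two_div_sqrt_two_mul_le hL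
    _ = 4 * σ * α * √L := by ring

end IsSubGaussianRV

/-- **Resilience of sub-Gaussian distributions.** There is a universal constant
`C > 0` such that for every `σ`-sub-Gaussian random variable `X` with mean `μ` and
every event `A` with `P(A) ≥ 1 − α` (with `α ∈ (0, 1/2]`, so in particular `P(A) > 0`),
the conditional mean satisfies `|E[X | A] − μ| ≤ C σ α √(log (1/α))`. -/
theorem subGaussian_resilience :
    ∃ C : ℝ, 0 < C ∧
      ∀ (Ω : Type) (_ : MeasurableSpace Ω) (P : Measure Ω), IsProbabilityMeasure P →
      ∀ (σ α μ : ℝ), 0 < σ → 0 < α → α ≤ 1 / 2 →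
      ∀ X : Ω → ℝ, IsSubGaussianRV P X μ σ →
      ∀ A : Set Ω, MeasurableSet A → ENNReal.ofReal (1 - α) ≤ P A →
        |(∫ ω in A, X ω ∂P) / (P A).toReal - μ|
          ≤ C * σ * α * Real.sqrt (Real.log (1 / α)) := by
  refine ⟨8, by norm_num, fun Ω _ P _ σ α μ hσ hα hα₂ X hX A hA hPA => ?_⟩
  rw [← measureReal_def]
  have hPA' : 1 - α ≤ P.real A := (ENNReal.ofReal_le_iff_le_toReal (measure_ne_top P A)).mp hPA
  have hPA₀ : 0 < P.real A := by linarith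
  have hcentered : (∫ ω in A, X ω ∂P) / P.real A - μ = (∫ ω in A, (X ω - μ) ∂P) / P.real A := by
    rw [integral_sub hX.2.1.integrableOn (integrable_const μ).integrableOn, setIntegral_const,
      smul_eq_mul]
    field_simp
  have hbias := hX.abs_setIntegral_sub_le hσ hα hα₂ hA
    (by rw [probReal_compl_eq_one_sub hA]; linarith)
  rw [hcentered, abs_div, abs_of_pos hPA₀, div_le_iff₀ hPA₀]
  have : 0 ≤ σ * α * √(log (1 / α)) := by positivity
  nlinarith
end

section
/- For every α ∈ [1, e/2] and all real constants C₁, C₂ > 0 such that log(C₂ / C₁^α) ≥ 1, the real number x = (α/C₁) [ log(C₂ e / C₁^α) + log log(C₂ / C₁^α) ] satisfies C₁ x ≥ log(C₂ x^α). -/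
open Real

/-- Garivier–Kaufmann, Lemma 18: for `α ∈ [1, e/2]` and constants `C₁, C₂ > 0` with
`log (C₂ / C₁^α) ≥ 1`, the choice
`x = (α / C₁) (log (C₂ e / C₁^α) + log log (C₂ / C₁^α))` satisfies `C₁ x ≥ log (C₂ x^α)`. -/
theorem inversion_lemma (α C₁ C₂ : ℝ)
    (hα₁ : 1 ≤ α) (hα₂ : α ≤ Real.exp 1 / 2)
    (hC₁ : 0 < C₁) (hC₂ : 0 < C₂)
    (hlog : 1 ≤ Real.log (C₂ / C₁ ^ α)) :
    C₁ * ((α / C₁) * (Real.log (C₂ * Real.exp 1 / C₁ ^ α)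
        + Real.log (Real.log (C₂ / C₁ ^ α))))
      ≥ Real.log (C₂ * ((α / C₁) * (Real.log (C₂ * Real.exp 1 / C₁ ^ α)
        + Real.log (Real.log (C₂ / C₁ ^ α)))) ^ α) := by
  have hα0 : (0:ℝ) < α := lt_of_lt_of_le one_pos hα₁
  have hC₁α : (0:ℝ) < C₁ ^ α := Real.rpow_pos_of_pos hC₁ α
  set L : ℝ := Real.log (C₂ / C₁ ^ α) with hLdef
  have hL0 : (0:ℝ) < L := lt_of_lt_of_le one_pos hlog
  have hlogL : 0 ≤ Real.log L := Real.log_nonneg hlog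
  have hLC : L = Real.log C₂ - α * Real.log C₁ := by
    rw [hLdef, Real.log_div (ne_of_gt hC₂) (ne_of_gt hC₁α), Real.log_rpow hC₁]
  have h1 : Real.log (C₂ * Real.exp 1 / C₁ ^ α) = L + 1 := by
    rw [Real.log_div (by positivity) (ne_of_gt hC₁α),
      Real.log_mul (ne_of_gt hC₂) (Real.exp_ne_zero 1), Real.log_exp, hLC,
      Real.log_rpow hC₁]
    ring
  rw [h1]
  set S : ℝ := L + 1 + Real.log L with hSdef
  have hS2 : (2:ℝ) ≤ S := by simp only [hSdef]; linarith
  have hS0 : (0:ℝ) < S := by linarith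
  have hx0 : (0:ℝ) < (α / C₁) * S := by positivity
  have hlogx : Real.log ((α / C₁) * S) = Real.log α - Real.log C₁ + Real.log S := by
    rw [Real.log_mul (ne_of_gt (by positivity)) (ne_of_gt hS0),
      Real.log_div (ne_of_gt hα0) (ne_of_gt hC₁)]
  have hRHS : Real.log (C₂ * ((α / C₁) * S) ^ α)
      = L + α * Real.log α + α * Real.log S := by
    rw [Real.log_mul (ne_of_gt hC₂) (ne_of_gt (Real.rpow_pos_of_pos hx0 α)),
      Real.log_rpow hx0, hlogx, hLC]
    ring
  have hLHS : C₁ * ((α / C₁) * S) = α * S := by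
    field_simp
  rw [hRHS, hLHS]
  -- key inequalities
  have hlogα : Real.log α ≤ 1 - Real.log 2 := by
    have h := Real.log_le_log hα0 hα₂
    rwa [Real.log_div (Real.exp_ne_zero 1) two_ne_zero, Real.log_exp] at h
  have hS2L : S ≤ 2 * L := by
    have h := Real.log_le_sub_one_of_pos hL0
    simp only [hSdef]; linarith
  have hlogS : Real.log S ≤ Real.log 2 + Real.log L := by
    calc Real.log S ≤ Real.log (2 * L) := Real.log_le_log hS0 hS2L
      _ = Real.log 2 + Real.log L := Real.log_mul two_ne_zero (ne_of_gt hL0)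
  have hSsub : Real.log S ≤ S - 1 := Real.log_le_sub_one_of_pos hS0
  have hT0 : 0 ≤ S - Real.log S - 1 + Real.log 2 := by
    have h2 : (0:ℝ) ≤ Real.log 2 := Real.log_nonneg one_le_two
    linarith
  have hTL : L ≤ S - Real.log S - 1 + Real.log 2 := by
    simp only [hSdef] at *; linarith
  have hαT : S - Real.log S - 1 + Real.log 2
      ≤ α * (S - Real.log S - 1 + Real.log 2) := le_mul_of_one_le_left hT0 hα₁
  nlinarith [mul_le_mul_of_nonneg_left hlogα hα0.le]
end

section
/- For every σ > 0 and every ε ∈ (0, 1/2) there exists a constant L > 0 (depending only on σ and ε) such that for every integer K ≥ 2, every δ ∈ (0, 1/2], every Δ ∈ (0, 1], and every integer t ≥ 1: if t ≥ (L/Δ²) log(K/(δΔ)), then 4 · (σ/(1−ε)) · √( (2/t) · log( K t² π² / (12 δ) ) ) < Δ. -/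
/-!
Write `c = σ/(1-ε)` and `A = log (K/(δΔ)) = log (K/δ) - log Δ ≥ 1`. Squaring, the claim is
`32 c² (log (K/δ) + 2 log t + log (π²/12)) < t Δ²`, and `π² < 12` removes the last term. The
term `log t` is absorbed by the tangent-line bound `log t ≤ t/a + log a` at `a = 128 c²/Δ²`,
which costs half of `t Δ²` plus `64 c² (128 c² - 2 log Δ)` (as `log x ≤ x`); everything left
over is at most `(128 c² + 8192 c⁴) A`, which the choice `L = 256 c² (1 + 64 c²)` pays for.
-/

open Real

namespace Real

lemma log_le_div_add_log {a t : ℝ} (ha : 0 < a) (ht : 0 < t) : log t ≤ t / a + log a := by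
  have h := log_le_sub_one_of_pos (div_pos ht ha)
  rw [log_div ht.ne' ha.ne'] at h
  linarith

lemma log_mul_sq_mul_pi_sq_div_lt {K δ t : ℝ} (hK : 0 < K) (hδ : 0 < δ) (ht : 0 < t) :
    log (K * t ^ 2 * π ^ 2 / (12 * δ)) < log (K / δ) + 2 * log t := by
  have hπ : π ^ 2 < 12 := by nlinarith [pi_lt_d2, pi_pos]
  have hlt : K * t ^ 2 * π ^ 2 / (12 * δ) < K / δ * t ^ 2 := by
    rw [div_lt_iff₀ (by positivity)]
    field_simp
    nlinarith [mul_pos hK (pow_pos ht 2)]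
  calc log (K * t ^ 2 * π ^ 2 / (12 * δ)) < log (K / δ * t ^ 2) :=
        log_lt_log (by positivity) hlt
    _ = log (K / δ) + 2 * log t := by
        rw [log_mul (by positivity) (by positivity), log_pow]; push_cast; ring

lemma one_le_log_div {K δ : ℝ} (hK : 2 ≤ K) (hδ : 0 < δ) (hδ₂ : δ ≤ 1 / 2) :
    1 ≤ log (K / δ) := by
  have h4 : 4 ≤ K / δ := by rw [le_div_iff₀ hδ]; linarith
  rw [le_log_iff_exp_le (by linarith)]
  linarith [exp_one_lt_d9]

end Real

lemma sq_mul_log_add_two_log_le {c u Δ t : ℝ} (hc : 0 < c) (hu : 0 ≤ u) (hΔ : 0 < Δ)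
    (hA : 1 ≤ u - log Δ) (ht : 0 < t)
    (h : 256 * c ^ 2 * (1 + 64 * c ^ 2) * (u - log Δ) ≤ t * Δ ^ 2) :
    32 * c ^ 2 * (u + 2 * log t) ≤ t * Δ ^ 2 := by
  have ha : 0 < 128 * c ^ 2 / Δ ^ 2 := by positivity
  have hlog_a : log (128 * c ^ 2 / Δ ^ 2) ≤ 128 * c ^ 2 - 2 * log Δ := by
    rw [log_div (by positivity) (by positivity), log_pow]
    push_cast
    linarith [log_le_self (by positivity : (0 : ℝ) ≤ 128 * c ^ 2)]
  have hlog_t : 64 * c ^ 2 * log t ≤ t * Δ ^ 2 / 2 + 64 * c ^ 2 * (128 * c ^ 2 - 2 * log Δ) := by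
    have h64 : 64 * c ^ 2 * (t / (128 * c ^ 2 / Δ ^ 2)) = t * Δ ^ 2 / 2 := by
      field_simp; ring
    calc 64 * c ^ 2 * log t
        ≤ 64 * c ^ 2 * (t / (128 * c ^ 2 / Δ ^ 2) + log (128 * c ^ 2 / Δ ^ 2)) :=
          mul_le_mul_of_nonneg_left (log_le_div_add_log ha ht) (by positivity)
      _ ≤ t * Δ ^ 2 / 2 + 64 * c ^ 2 * (128 * c ^ 2 - 2 * log Δ) := by
          rw [mul_add, h64]; gcongr
  have hc4 : 8192 * c ^ 4 ≤ 8192 * c ^ 4 * (u - log Δ) :=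
    le_mul_of_one_le_right (by positivity) hA
  linarith [mul_nonneg (sq_nonneg c) hu]

lemma four_mul_mul_sqrt_two_div_mul_lt {c t X Δ : ℝ} (hc : 0 ≤ c) (ht : 0 < t) (hΔ : 0 < Δ)
    (h : 32 * c ^ 2 * X < t * Δ ^ 2) : 4 * c * √(2 / t * X) < Δ := by
  rw [← sqrt_sq (by positivity : 0 ≤ 4 * c), ← sqrt_mul (sq_nonneg _), sqrt_lt' hΔ]
  rw [show (4 * c) ^ 2 * (2 / t * X) = 32 * c ^ 2 * X / t by field_simp; ring, div_lt_iff₀ ht]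
  linarith

theorem se_cbai_elimination_time_general (σ ε : ℝ) (hσ : 0 < σ) (hε₁ : ε < 1 / 2) :
    ∃ L : ℝ, 0 < L ∧
      ∀ (K : ℕ) (δ Δ : ℝ) (t : ℕ), 2 ≤ K → 0 < δ → δ ≤ 1 / 2 → 0 < Δ → Δ ≤ 1 → 1 ≤ t →
        (L / Δ ^ 2) * Real.log ((K : ℝ) / (δ * Δ)) ≤ (t : ℝ) →
        4 * (σ / (1 - ε)) *
            Real.sqrt ((2 / (t : ℝ)) * Real.log ((K : ℝ) * (t : ℝ) ^ 2 * Real.pi ^ 2 / (12 * δ)))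
          < Δ := by
  set c := σ / (1 - ε)
  have hc : 0 < c := div_pos hσ (by linarith)
  refine ⟨256 * c ^ 2 * (1 + 64 * c ^ 2), by positivity, ?_⟩
  intro K δ Δ t hK hδ hδ₂ hΔ hΔ₁ ht hT
  have hK' : (2 : ℝ) ≤ K := by exact_mod_cast hK
  have ht' : (0 : ℝ) < t := by exact_mod_cast ht
  have hKδ : 1 ≤ log (K / δ) := one_le_log_div hK' hδ hδ₂
  have hlogΔ : log Δ ≤ 0 := log_nonpos hΔ.le hΔ₁
  rw [div_mul_eq_div_div, log_div (by positivity) hΔ.ne', div_mul_eq_mul_div,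
    div_le_iff₀ (by positivity)] at hT
  refine four_mul_mul_sqrt_two_div_mul_lt hc.le ht' hΔ ?_
  calc 32 * c ^ 2 * log (K * t ^ 2 * π ^ 2 / (12 * δ))
      < 32 * c ^ 2 * (log (K / δ) + 2 * log t) :=
        mul_lt_mul_of_pos_left (log_mul_sq_mul_pi_sq_div_lt (by positivity) hδ ht') (by positivity)
    _ ≤ t * Δ ^ 2 :=
        sq_mul_log_add_two_log_le hc (by linarith) hΔ (by linarith) ht' hT

/-- Inversion of the exploration radius of SE-CBAI: for every `σ > 0` and `ε ∈ (0, 1/2)`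
there is a constant `L > 0` such that for all `K ≥ 2`, `δ ∈ (0, 1/2]`, `Δ ∈ (0, 1]` and
integers `t ≥ 1` with `t ≥ (L / Δ²) log (K / (δ Δ))`, one has
`4 (σ/(1-ε)) √((2/t) log (K t² π² / (12 δ))) < Δ`. -/
theorem se_cbai_elimination_time (σ ε : ℝ) (hσ : 0 < σ) (hε₀ : 0 < ε) (hε₁ : ε < 1 / 2) :
    ∃ L : ℝ, 0 < L ∧
      ∀ (K : ℕ) (δ Δ : ℝ) (t : ℕ), 2 ≤ K → 0 < δ → δ ≤ 1 / 2 → 0 < Δ → Δ ≤ 1 → 1 ≤ t →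
        (L / Δ ^ 2) * Real.log ((K : ℝ) / (δ * Δ)) ≤ (t : ℝ) →
        4 * (σ / (1 - ε)) *
            Real.sqrt ((2 / (t : ℝ)) * Real.log ((K : ℝ) * (t : ℝ) ^ 2 * Real.pi ^ 2 / (12 * δ)))
          < Δ :=
  se_cbai_elimination_time_general σ ε hσ hε₁
end
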